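/- arXiv:1709.01557 — 5 statements merged into one kernel-verified Lean document; each statement's English description precedes it below -/
import Mathlib

section
/- For every integer n ≥ 1, the polytope Q of achievable probabilities of the i.i.d. online bipartite matching model is full-dimensional in ℝ^{n³}, i.e., its affine hull is all of ℝ^{n³}. -/
open Finset

/-- Standard basis vector `e_{k,j}^τ` of `ℝ^{n³}`: one in coordinate `(k,j,τ)`, zero elsewhere. -/
def stdBasisVec (n : ℕ) (k j τ : Fin n) : Fin n → Fin n → Fin n → ℝ :=
  fun a b c => if a = k ∧ b = j ∧ c = τ then 1 else 0

/-- Time-indexed matching probabilities `z_{ij}^t = Σ_{S ⊆ V∖{j}} x_{i,j}^{t,S}`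
induced by policy variables `x`.  The stage `t : Fin n` encodes stage number `t.1 + 1`. -/
def obmZ (n : ℕ) (x : Fin n → Fin n → Fin n → Finset (Fin n) → ℝ) :
    Fin n → Fin n → Fin n → ℝ :=
  fun i j t => ∑ S ∈ (Finset.univ.erase j).powerset, x i j t S

/-- Feasibility of policy variables `(x, y)` for the OBM policy LP.
A stage index `t : Fin n` encodes the stage number `t.1 + 1 ∈ [n]` (stages counted down),
so stage `n` is the index with `t.1 = n - 1`, stage `1` is the index with `t.1 = 0`, and
the stage `t + 1` following `t` corresponds to the index `⟨t.1 + 1, _⟩`. -/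
def ObmFeasible (n : ℕ)
    (x : Fin n → Fin n → Fin n → Finset (Fin n) → ℝ)
    (y : Fin n → Fin n → Finset (Fin n) → ℝ) : Prop :=
  (∀ i j t S, 0 ≤ x i j t S) ∧
  (∀ i t S, 0 ≤ y i t S) ∧
  -- (a)
  (∀ i tn : Fin n, tn.1 = n - 1 →
    ∑ j : Fin n, x i j tn (Finset.univ.erase j) + y i tn Finset.univ ≤ 1 / (n : ℝ)) ∧
  -- (b)
  (∀ t : Fin n, ∀ ht : t.1 + 1 < n, ∀ i : Fin n, ∀ S : Finset (Fin n),
    S.Nonempty → S ⊂ Finset.univ → t.1 + 1 ≤ S.card →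
    ∑ j ∈ S, x i j t (S.erase j)
      + (if t.1 ≠ 0 then y i t S else 0)
      - (1 / (n : ℝ)) * (if t.1 + 1 < S.card then ∑ k : Fin n, y k ⟨t.1 + 1, ht⟩ S else 0)
      - (1 / (n : ℝ)) * ∑ k : Fin n, ∑ j ∈ Finset.univ \ S, x k j ⟨t.1 + 1, ht⟩ S ≤ 0) ∧
  -- (c)
  (∀ t : Fin n, ∀ ht : t.1 + 1 < n, ∀ i : Fin n,
    ∑ j : Fin n, x i j t (Finset.univ.erase j)
      + (if t.1 ≠ 0 then y i t Finset.univ else 0)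
      - (1 / (n : ℝ)) * ∑ k : Fin n, y k ⟨t.1 + 1, ht⟩ Finset.univ ≤ 0)

/-- The polytope `Q ⊆ ℝ^{n³}` of achievable time-indexed matching probabilities:
the projection of the feasible region of the OBM policy LP via
`z_{ij}^t = Σ_{S ⊆ V∖{j}} x_{i,j}^{t,S}`. -/
def ObmQ (n : ℕ) : Set (Fin n → Fin n → Fin n → ℝ) :=
  { z | ∃ x y, ObmFeasible n x y ∧ z = obmZ n x }

/-- `0` is achievable. -/
lemma obm_zero_mem (n : ℕ) (hn : 1 ≤ n) : (0 : Fin n → Fin n → Fin n → ℝ) ∈ ObmQ n := by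
  refine ⟨0, 0, ⟨fun _ _ _ _ => le_refl 0, fun _ _ _ => le_refl 0, ?_, ?_, ?_⟩, ?_⟩
  · intro i tn _
    simp
    try positivity
  · intro t ht i S _ _ _
    simp
  · intro t ht i
    simp
  · funext i j t
    simp [obmZ]

/-- The scaled basis vectors are achievable. -/
lemma obm_basis_mem (n : ℕ) (hn : 1 ≤ n) (k j0 τ : Fin n) :
    (fun a b c => if a = k ∧ b = j0 ∧ c = τ then (n : ℝ)⁻¹ else 0) ∈ ObmQ n := by
  have hn0 : (n : ℝ) ≠ 0 := by positivity
  have hnpos : (0:ℝ) < (n : ℝ)⁻¹ := by positivity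
  set c : ℝ := (n : ℝ)⁻¹ with hc
  set x : Fin n → Fin n → Fin n → Finset (Fin n) → ℝ :=
    fun i j t S => if i = k ∧ j = j0 ∧ t = τ ∧ S = Finset.univ.erase j0 then c else 0 with hx
  set y : Fin n → Fin n → Finset (Fin n) → ℝ :=
    fun i t S => if τ.1 < t.1 ∧ S = Finset.univ then c else 0 with hy
  have hxsum : ∀ i t, ∑ j : Fin n, x i j t (Finset.univ.erase j)
      = if i = k ∧ t = τ then c else 0 := by
    intro i t
    have h1 : ∀ j : Fin n, x i j t (Finset.univ.erase j)
        = if j = j0 then (if i = k ∧ t = τ then c else 0) else 0 := by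
      intro j
      simp only [hx]
      by_cases hj : j = j0
      · subst hj
        by_cases h2 : i = k ∧ t = τ
        · rw [if_pos ⟨h2.1, rfl, h2.2, rfl⟩, if_pos rfl, if_pos h2]
        · rw [if_neg (fun h => h2 ⟨h.1, h.2.2.1⟩), if_pos rfl, if_neg h2]
      · rw [if_neg (fun h => hj h.2.1), if_neg hj]
    rw [Finset.sum_congr rfl fun j _ => h1 j]
    simp
  have hysum : ∀ t' : Fin n, ∑ k' : Fin n, y k' t' Finset.univ
      = (n : ℝ) * (if τ.1 < t'.1 then c else 0) := by
    intro t'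
    have : ∀ k' : Fin n, y k' t' Finset.univ = if τ.1 < t'.1 then c else 0 := by
      intro k'; simp [hy]
    rw [Finset.sum_congr rfl fun k' _ => this k']
    simp [mul_comm]
  refine ⟨x, y, ⟨?_, ?_, ?_, ?_, ?_⟩, ?_⟩
  · intro i j t S
    simp only [hx]
    split <;> [exact le_of_lt hnpos; exact le_refl 0]
  · intro i t S
    simp only [hy]
    split <;> [exact le_of_lt hnpos; exact le_refl 0]
  · -- (a)
    intro i tn htn
    rw [hxsum]
    have hyv : y i tn Finset.univ = if τ.1 < tn.1 then c else 0 := by simp [hy]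
    rw [hyv]
    by_cases h1 : i = k ∧ tn = τ
    · rw [if_pos h1, if_neg (by rw [h1.2]; exact lt_irrefl _)]
      simp [hc, one_div]
    · rw [if_neg h1]
      split
      · simp [hc, one_div]
      · simp only [add_zero, zero_add]
        positivity
  · -- (b)
    intro t ht i S hSne hSsub hcard
    have hSneq : S ≠ Finset.univ := hSsub.ne
    have h1 : ∑ j ∈ S, x i j t (S.erase j) = 0 := by
      apply Finset.sum_eq_zero
      intro j hj
      simp only [hx]
      rw [if_neg]
      rintro ⟨-, hjj, -, hS⟩
      subst hjj
      apply hSneq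
      have : S = insert j (S.erase j) := (Finset.insert_erase hj).symm
      rw [this, hS, Finset.insert_erase (Finset.mem_univ j)]
    have h2 : (if t.1 ≠ 0 then y i t S else 0) = 0 := by
      simp only [hy]
      split
      · rw [if_neg]; rintro ⟨-, h⟩; exact hSneq h
      · rfl
    have h3 : ∀ k' : Fin n, y k' ⟨t.1 + 1, ht⟩ S = 0 := by
      intro k'
      simp only [hy]
      rw [if_neg]; rintro ⟨-, h⟩; exact hSneq h
    have h4 : 0 ≤ (1 / (n : ℝ)) * ∑ k' : Fin n, ∑ j ∈ Finset.univ \ S, x k' j ⟨t.1 + 1, ht⟩ S := by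
      apply mul_nonneg (by positivity)
      apply Finset.sum_nonneg; intro k' _
      apply Finset.sum_nonneg; intro j _
      simp only [hx]; split <;> [exact le_of_lt hnpos; exact le_refl 0]
    rw [h1, h2]
    have h5 : (if t.1 + 1 < S.card then ∑ k' : Fin n, y k' ⟨t.1 + 1, ht⟩ S else 0) = 0 := by
      split
      · exact Finset.sum_eq_zero fun k' _ => h3 k'
      · rfl
    rw [h5]
    simp only [mul_zero, sub_zero, add_zero, zero_add, zero_sub, neg_nonpos]
    linarith
  · -- (c)
    intro t ht i
    rw [hxsum, hysum]
    simp only [Fin.val_mk]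
    have h2 : (if t.1 ≠ 0 then y i t Finset.univ else 0) = if τ.1 < t.1 then c else 0 := by
      simp only [hy]
      split
      · simp
      · rename_i h
        rw [if_neg]
        push_neg at h
        omega
    rw [h2]
    have hmul : (1 / (n : ℝ)) * ((n : ℝ) * c) = c := by
      field_simp
    by_cases hA : i = k ∧ t = τ
    · have htτ : t.1 = τ.1 := by rw [hA.2]
      rw [if_pos hA, if_neg (by omega), if_pos (by omega)]
      rw [hmul]; linarith
    · rw [if_neg hA]
      by_cases hC : τ.1 < t.1
      · rw [if_pos hC, if_pos (by omega), hmul]; linarith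
      · rw [if_neg hC]
        by_cases hD : τ.1 < t.1 + 1
        · rw [if_pos hD, hmul]; linarith
        · rw [if_neg hD]; simp
  · -- z = obmZ x
    funext i j t
    simp only [obmZ, hx]
    by_cases h1 : i = k ∧ j = j0 ∧ t = τ
    · rw [if_pos h1, h1.2.1]
      have : ∀ S ∈ (Finset.univ.erase j0).powerset,
          (if i = k ∧ j0 = j0 ∧ t = τ ∧ S = Finset.univ.erase j0 then c else 0)
          = if S = Finset.univ.erase j0 then c else 0 := by
        intro S _
        by_cases hS : S = Finset.univ.erase j0
        · rw [if_pos ⟨h1.1, rfl, h1.2.2, hS⟩, if_pos hS]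
        · rw [if_neg (fun h => hS h.2.2.2), if_neg hS]
      rw [Finset.sum_congr rfl this, Finset.sum_ite_eq' _ _ (fun _ => c)]
      rw [if_pos (Finset.mem_powerset.mpr (le_refl _))]
    · rw [if_neg h1]
      symm
      apply Finset.sum_eq_zero
      intro S _
      rw [if_neg]
      rintro ⟨ha, hb, hcc, -⟩
      exact h1 ⟨ha, hb, hcc⟩

/-- For every integer `n ≥ 1`, the polytope `Q` of achievable probabilities of
the i.i.d. online bipartite matching model is full-dimensional in `ℝ^{n³}`, i.e. its affine
hull is all of `ℝ^{n³}`. -/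
theorem obmQ_full_dimensional (n : ℕ) (hn : 1 ≤ n) :
    affineSpan ℝ (ObmQ n) = ⊤ := by
  have hn0 : (n : ℝ) ≠ 0 := by positivity
  have h0 := obm_zero_mem n hn
  have hb := obm_basis_mem n hn
  have hne : (ObmQ n).Nonempty := ⟨0, h0⟩
  rw [AffineSubspace.affineSpan_eq_top_iff_vectorSpan_eq_top_of_nonempty ℝ _ _ hne]
  rw [eq_top_iff]
  intro v _
  have hmem : ∀ k j τ : Fin n,
      (fun a b c => if a = k ∧ b = j ∧ c = τ then (n : ℝ)⁻¹ else 0)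
        ∈ vectorSpan ℝ (ObmQ n) := by
    intro k j τ
    have : (fun a b c => if a = k ∧ b = j ∧ c = τ then (n : ℝ)⁻¹ else 0)
        = (fun a b c => if a = k ∧ b = j ∧ c = τ then (n : ℝ)⁻¹ else 0)
          -ᵥ (0 : Fin n → Fin n → Fin n → ℝ) := by simp
    rw [this]
    exact vsub_mem_vectorSpan ℝ (hb k j τ) h0
  have hv : v = ∑ k : Fin n, ∑ j : Fin n, ∑ τ : Fin n,
      ((n : ℝ) * v k j τ) • (fun a b c => if a = k ∧ b = j ∧ c = τ then (n : ℝ)⁻¹ else 0 : Fin n → Fin n → Fin n → ℝ) := by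
    funext a b c
    simp only [Finset.sum_apply, Pi.smul_apply, smul_eq_mul]
    rw [Finset.sum_eq_single a, Finset.sum_eq_single b, Finset.sum_eq_single c]
    · rw [if_pos ⟨rfl, rfl, rfl⟩]
      field_simp
    · intro τ' _ hτ'
      rw [if_neg (by tauto), mul_zero]
    · intro h; exact absurd (Finset.mem_univ c) h
    · intro j' _ hj'
      apply Finset.sum_eq_zero; intro τ' _
      rw [if_neg (by tauto), mul_zero]
    · intro h; exact absurd (Finset.mem_univ b) h
    · intro k' _ hk'
      apply Finset.sum_eq_zero; intro j' _
      apply Finset.sum_eq_zero; intro τ' _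
      rw [if_neg (by tauto), mul_zero]
    · intro h; exact absurd (Finset.mem_univ a) h
  rw [hv]
  apply Submodule.sum_mem; intro k _
  apply Submodule.sum_mem; intro j _
  apply Submodule.sum_mem; intro τ _
  exact Submodule.smul_mem _ _ (hmem k j τ)
end

section
/- Let n ≥ 1 and let z = (z_{ij}^t) ∈ ℝ^{n³} with z ≥ 0 (indexed by i ∈ N, j ∈ V, t ∈ [n]) satisfy, for every i ∈ N, j ∈ V and t ∈ [n], the inequality Σ_{τ=t+1}^{n} Σ_{k∈N} z_{kj}^{τ} + n·z_{ij}^{t} ≤ 1. Then for every ad j ∈ V and every subset I ⊆ N of impression types, Σ_{t=1}^{n} Σ_{i∈I} z_{ij}^{t} ≤ 1 − (1 − |I|/n)^n. In other words, the time-indexed inequalities imply the right-star inequalities for the aggregated probabilities z_{ij} := Σ_{t=1}^{n} z_{ij}^{t}. -/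
open Finset

/-! Write `a_t = Σ_{i∈I} z_{ij}^t` and `r = |I|/n`. Summing the time-indexed inequality over
`i ∈ I` gives `a_t ≤ r (1 - Σ_{τ>t} a_τ)`, i.e. the remaining mass `1 - Σ_{τ≥t} a_τ` is at least
`(1 - r)` times `1 - Σ_{τ>t} a_τ`. Going down from the last stage, `1 - Σ_t a_t ≥ (1 - r)^n`. -/

theorem one_sub_pow_card_le_one_sub_sum {α : Type*} [LinearOrder α] (s : Finset α) (a : α → ℝ)
    {r : ℝ} (hr : r ≤ 1) (h : ∀ t ∈ s, a t ≤ r * (1 - ∑ τ ∈ s with t < τ, a τ)) :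
    (1 - r) ^ #s ≤ 1 - ∑ t ∈ s, a t := by
  classical
  induction s using Finset.induction_on_min with
  | empty => simp
  | insert t s hlt ih =>
    have ht : t ∉ s := fun hts => (hlt t hts).false
    have hs : ∀ x ∈ s, a x ≤ r * (1 - ∑ τ ∈ s with x < τ, a τ) := by
      intro x hx
      have hfilter : ({τ ∈ insert t s | x < τ} : Finset α) = {τ ∈ s | x < τ} := by
        rw [filter_insert, if_neg (hlt x hx).asymm]
      simpa only [hfilter] using h x (mem_insert_of_mem hx)
    have htail : ({τ ∈ insert t s | t < τ} : Finset α) = s := by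
      rw [filter_insert, if_neg (lt_irrefl t), filter_true_of_mem hlt]
    have hat : a t ≤ r * (1 - ∑ τ ∈ s, a τ) := by
      simpa only [htail] using h t (mem_insert_self t s)
    have hrest := ih hs
    rw [card_insert_of_notMem ht, sum_insert ht, pow_succ]
    calc (1 - r) ^ #s * (1 - r) ≤ (1 - ∑ τ ∈ s, a τ) * (1 - r) :=
          mul_le_mul_of_nonneg_right hrest (sub_nonneg.mpr hr)
      _ ≤ 1 - (a t + ∑ τ ∈ s, a τ) := by linarith

theorem sum_le_card_div_mul_of_mul_le {ι : Type*} (I : Finset ι) (f : ι → ℝ) {c b : ℝ}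
    (hc : 0 < c) (h : ∀ i ∈ I, c * f i ≤ b) : ∑ i ∈ I, f i ≤ #I / c * b := by
  calc ∑ i ∈ I, f i ≤ #I • (b / c) :=
        sum_le_card_nsmul I f _ fun i hi => by rw [le_div_iff₀ hc, mul_comm]; exact h i hi
    _ = #I / c * b := by rw [nsmul_eq_mul]; ring

theorem time_indexed_implies_right_star_general (n : ℕ)
    (z : Fin n → Fin n → Fin n → ℝ)
    (hz : ∀ i j t, 0 ≤ z i j t)
    (hineq : ∀ i j t : Fin n,
      (∑ τ ∈ Finset.Ioi t, ∑ k : Fin n, z k j τ) + (n : ℝ) * z i j t ≤ 1) :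
    ∀ j : Fin n, ∀ I : Finset (Fin n),
      ∑ t : Fin n, ∑ i ∈ I, z i j t ≤ 1 - (1 - (I.card : ℝ) / n) ^ n := by
  intro j I
  have hr : (#I : ℝ) / n ≤ 1 :=
    div_le_one_of_le₀ (by exact_mod_cast card_le_univ I |>.trans_eq (Fintype.card_fin n))
      n.cast_nonneg
  have hstage : ∀ t ∈ (univ : Finset (Fin n)), ∑ i ∈ I, z i j t ≤
      #I / n * (1 - ∑ τ ∈ univ with t < τ, ∑ i ∈ I, z i j τ) := by
    intro t _
    have hn : (0 : ℝ) < n := by exact_mod_cast t.pos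
    have htail : ∑ τ ∈ Ioi t, ∑ i ∈ I, z i j τ ≤ ∑ τ ∈ Ioi t, ∑ k : Fin n, z k j τ :=
      sum_le_sum fun τ _ => sum_le_sum_of_subset_of_nonneg (subset_univ I) fun k _ _ => hz k j τ
    rw [filter_lt_eq_Ioi]
    calc ∑ i ∈ I, z i j t ≤ #I / n * (1 - ∑ τ ∈ Ioi t, ∑ k : Fin n, z k j τ) :=
          sum_le_card_div_mul_of_mul_le I _ hn fun i _ => by linarith [hineq i j t]
      _ ≤ #I / n * (1 - ∑ τ ∈ Ioi t, ∑ i ∈ I, z i j τ) := by gcongr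
  have := one_sub_pow_card_le_one_sub_sum univ _ hr hstage
  rw [card_univ, Fintype.card_fin] at this
  linarith

/-- If `z ≥ 0` satisfies `Σ_{τ=t+1}^n Σ_{k∈N} z_{kj}^τ + n·z_{ij}^t ≤ 1` for
all `i, j, t`, then for every ad `j` and every `I ⊆ N`,
`Σ_{t=1}^n Σ_{i∈I} z_{ij}^t ≤ 1 − (1 − |I|/n)^n`:
the time-indexed inequalities imply the right-star inequalities. -/
theorem time_indexed_implies_right_star (n : ℕ) (hn : 1 ≤ n)
    (z : Fin n → Fin n → Fin n → ℝ)
    (hz : ∀ i j t, 0 ≤ z i j t)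
    (hineq : ∀ i j t : Fin n,
      (∑ τ ∈ Finset.Ioi t, ∑ k : Fin n, z k j τ) + (n : ℝ) * z i j t ≤ 1) :
    ∀ j : Fin n, ∀ I : Finset (Fin n),
      ∑ t : Fin n, ∑ i ∈ I, z i j t ≤ 1 - (1 - (I.card : ℝ) / n) ^ n :=
  time_indexed_implies_right_star_general n z hz hineq
end

section
/- Let n ≥ 1 and let z = (z_{ij}^t) ∈ ℝ^{n³} with z ≥ 0 (indexed by i ∈ N, j ∈ V, t ∈ [n]) satisfy: (i) Σ_{j∈V} z_{ij}^t ≤ 1/n for all i ∈ N and t ∈ [n], and (ii) Σ_{τ=t+1}^{n} Σ_{k∈N} z_{kj}^{τ} + n·z_{ij}^{t} ≤ 1 for all i ∈ N, j ∈ V, t ∈ [n]. Then the aggregated vector z_{ij} := Σ_{t=1}^n z_{ij}^t satisfies Σ_{j∈V} z_{ij} ≤ 1 for all i ∈ N, Σ_{i∈N} z_{ij} ≤ 1 for all j ∈ V, and Σ_{i∈I} z_{ij} ≤ 1 − (1 − |I|/n)^n for all j ∈ V and I ⊆ N. Consequently, the dynamic relaxation defined by (i) and (ii) dominates the static max-flow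 relaxation with right-star inequalities. -/
open Finset

private lemma rightStar_aux (n : ℕ) (hn : 1 ≤ n)
    (z : Fin n → Fin n → Fin n → ℝ)
    (hz : ∀ i j t, 0 ≤ z i j t)
    (hineq : ∀ i j t : Fin n,
      (∑ τ ∈ Finset.Ioi t, ∑ k : Fin n, z k j τ) + (n : ℝ) * z i j t ≤ 1)
    (j : Fin n) (I : Finset (Fin n)) :
    ∑ i ∈ I, ∑ t : Fin n, z i j t ≤ 1 - (1 - (I.card : ℝ) / n) ^ n := by
  have hn0 : (0:ℝ) < n := by exact_mod_cast hn
  set m : ℝ := (I.card : ℝ) with hm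
  have hm0 : 0 ≤ m := by positivity
  have hmn : m ≤ n := by
    have h : I.card ≤ n := by
      simpa using Finset.card_le_card (Finset.subset_univ I)
    rw [hm]; exact_mod_cast h
  set a : Fin n → ℝ := fun t => ∑ i ∈ I, z i j t with ha
  have ha0 : ∀ t, 0 ≤ a t := fun t => Finset.sum_nonneg fun i _ => hz i j t
  have key : ∀ t, a t ≤ (m / n) * (1 - ∑ τ ∈ Finset.Ioi t, a τ) := by
    intro t
    have hb : ∀ τ ∈ Finset.Ioi t, a τ ≤ ∑ k, z k j τ := fun τ _ =>
      Finset.sum_le_sum_of_subset_of_nonneg (Finset.subset_univ I)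
        (fun k _ _ => hz k j τ)
    have h3 : ∑ τ ∈ Finset.Ioi t, a τ ≤ ∑ τ ∈ Finset.Ioi t, ∑ k, z k j τ :=
      Finset.sum_le_sum hb
    have h2 : m * (∑ τ ∈ Finset.Ioi t, ∑ k, z k j τ) + (n:ℝ) * a t ≤ m := by
      have := Finset.sum_le_sum (fun i (_ : i ∈ I) => hineq i j t)
      simpa [Finset.sum_add_distrib, Finset.mul_sum, mul_comm, hm, ha] using this
    rw [div_mul_eq_mul_div, le_div_iff₀ hn0]
    nlinarith [mul_le_mul_of_nonneg_left h3 hm0]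
  have hc0 : (0:ℝ) ≤ 1 - m / n := by
    have : m / n ≤ 1 := (div_le_one hn0).mpr hmn
    linarith
  have main : ∀ r, r ≤ n →
      (1 - m / n) ^ r ≤ 1 - ∑ τ ∈ Finset.univ.filter (fun τ : Fin n => n - r ≤ τ.1), a τ := by
    intro r
    induction r with
    | zero =>
      intro _
      have hset : Finset.univ.filter (fun τ : Fin n => n - 0 ≤ τ.1) = ∅ := by
        ext τ
        simp only [Finset.mem_filter, Finset.mem_univ, true_and, Finset.notMem_empty,
          iff_false]
        omega
      rw [hset]
      simp
    | succ r ih =>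
      intro hrn
      have hr : r < n := hrn
      have ihr := ih hr.le
      set t₀ : Fin n := ⟨n - (r+1), by omega⟩ with ht₀
      have hIoi : Finset.Ioi t₀ = Finset.univ.filter (fun τ : Fin n => n - r ≤ τ.1) := by
        ext τ
        simp only [Finset.mem_Ioi, Finset.mem_filter, Finset.mem_univ, true_and,
          Fin.lt_def, ht₀, Fin.val_mk]
        omega
      have hset : Finset.univ.filter (fun τ : Fin n => n - (r+1) ≤ τ.1)
          = insert t₀ (Finset.Ioi t₀) := by
        ext τ
        simp only [Finset.mem_filter, Finset.mem_univ, true_and, Finset.mem_insert,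
          Finset.mem_Ioi, Fin.lt_def, ht₀, Fin.ext_iff, Fin.val_mk]
        omega
      rw [hset, Finset.sum_insert (by simp), hIoi]
      have hk := key t₀
      rw [hIoi] at hk
      have h5 : (1 - m/n) * (1 - m/n) ^ r
          ≤ (1 - m/n) * (1 - ∑ τ ∈ Finset.univ.filter (fun τ : Fin n => n - r ≤ τ.1), a τ) :=
        mul_le_mul_of_nonneg_left ihr hc0
      rw [pow_succ]
      nlinarith [h5, hk]
  have hfin := main n le_rfl
  have hset : Finset.univ.filter (fun τ : Fin n => n - n ≤ τ.1) = Finset.univ := by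
    ext τ; simp
  rw [hset] at hfin
  have hcomm : ∑ i ∈ I, ∑ t : Fin n, z i j t = ∑ t : Fin n, a t := Finset.sum_comm
  rw [hcomm]
  linarith

/-- If `z ≥ 0` satisfies (i) `Σ_{j∈V} z_{ij}^t ≤ 1/n` for all `i, t` and
(ii) `Σ_{τ=t+1}^n Σ_{k∈N} z_{kj}^τ + n·z_{ij}^t ≤ 1` for all `i, j, t`, then the aggregated
vector `z_{ij} = Σ_t z_{ij}^t` satisfies `Σ_j z_{ij} ≤ 1`, `Σ_i z_{ij} ≤ 1` and the
right-star inequalities `Σ_{i∈I} z_{ij} ≤ 1 − (1 − |I|/n)^n`: the dynamic relaxation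
dominates the static max-flow relaxation with right-star inequalities. -/
theorem dynamic_dominates_static (n : ℕ) (hn : 1 ≤ n)
    (z : Fin n → Fin n → Fin n → ℝ)
    (hz : ∀ i j t, 0 ≤ z i j t)
    (hprob : ∀ i t : Fin n, ∑ j : Fin n, z i j t ≤ 1 / (n : ℝ))
    (hineq : ∀ i j t : Fin n,
      (∑ τ ∈ Finset.Ioi t, ∑ k : Fin n, z k j τ) + (n : ℝ) * z i j t ≤ 1) :
    (∀ i : Fin n, ∑ j : Fin n, ∑ t : Fin n, z i j t ≤ 1) ∧
    (∀ j : Fin n, ∑ i : Fin n, ∑ t : Fin n, z i j t ≤ 1) ∧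
    (∀ j : Fin n, ∀ I : Finset (Fin n),
      ∑ i ∈ I, ∑ t : Fin n, z i j t ≤ 1 - (1 - (I.card : ℝ) / n) ^ n) := by
  have hn0 : (0:ℝ) < n := by exact_mod_cast hn
  have star := rightStar_aux n hn z hz hineq
  refine ⟨?_, ?_, star⟩
  · intro i
    calc ∑ j, ∑ t, z i j t = ∑ t, ∑ j, z i j t := Finset.sum_comm
      _ ≤ ∑ _t : Fin n, 1 / (n:ℝ) := Finset.sum_le_sum fun t _ => hprob i t
      _ = 1 := by
          rw [Finset.sum_const, Finset.card_univ, Fintype.card_fin, nsmul_eq_mul]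
          field_simp
  · intro j
    have h := star j Finset.univ
    have hcard : ((Finset.univ : Finset (Fin n)).card : ℝ) = n := by
      simp
    rw [hcard, div_self (ne_of_gt hn0)] at h
    simpa [zero_pow (by omega : n ≠ 0)] using h
end

section
/- Let v*_t(i,S) be defined by the dynamic programming recursion v*_0(i,S) := 0 and, for t ∈ [n], i ∈ N, S ⊆ V: v*_t(i,S) := max{ max_{j∈S} ( w^t_{ij} + (1/n)·Σ_{k∈N} v*_{t−1}(k, S∖{j}) ), (1/n)·Σ_{k∈N} v*_{t−1}(k,S) }. Suppose v = (v_t(i,S))_{0 ≤ t ≤ n, i∈N, S⊆V} is any nonnegative family satisfying, for all t ∈ [n], i ∈ N, j ∈ V, S ⊆ V∖{j}: v_t(i, S∪{j}) − (1/n)·Σ_{k∈N} v_{t−1}(k,S) ≥ w^t_{ij}, and for all t ∈ [n], i ∈ N, S ⊆ V: v_t(i,S) − (1/n)·Σ_{k∈N} v_{t−1}(k,S) ≥ 0. Then v_t(i,S) ≥ v*_t(i,S) for every t ∈ [n], i ∈ N, S ⊆ V; in particular (1/n)·Σ_{i∈N} v_n(i,V) ≥ (1/n)·Σ_{i∈N}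 v*_n(i,V). Moreover, v* itself is nonnegative and satisfies all of these constraints, so v* is an optimal solution of the linear program that minimizes (1/n)·Σ_{i∈N} v_n(i,V) subject to these constraints, with optimal value equal to the optimal expected value of the OBM dynamic program. -/
open Finset

lemma obm_aux_mono (n : ℕ)
    (w : ℕ → Fin n → Fin n → ℝ)
    (vstar : ℕ → Fin n → Finset (Fin n) → ℝ)
    (hst0 : ∀ i S, vstar 0 i S = 0)
    (hstrec : ∀ t, 1 ≤ t → t ≤ n → ∀ i : Fin n, ∀ S : Finset (Fin n), ∀ hS : S.Nonempty,
      vstar t i S =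
        max (S.sup' hS fun j =>
              w t i j + (1 / (n : ℝ)) * ∑ k : Fin n, vstar (t - 1) k (S.erase j))
          ((1 / (n : ℝ)) * ∑ k : Fin n, vstar (t - 1) k S))
    (hstrec0 : ∀ t, 1 ≤ t → t ≤ n → ∀ i : Fin n,
      vstar t i (∅ : Finset (Fin n)) = (1 / (n : ℝ)) * ∑ k : Fin n, vstar (t - 1) k ∅)
    (u : ℕ → Fin n → Finset (Fin n) → ℝ)
    (hu0 : ∀ t, t ≤ n → ∀ i S, 0 ≤ u t i S)
    (hc1 : ∀ t, 1 ≤ t → t ≤ n → ∀ i j : Fin n, ∀ S : Finset (Fin n), j ∉ S →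
      w t i j ≤ u t i (insert j S) - (1 / (n : ℝ)) * ∑ k : Fin n, u (t - 1) k S)
    (hc2 : ∀ t, 1 ≤ t → t ≤ n → ∀ i : Fin n, ∀ S : Finset (Fin n),
      0 ≤ u t i S - (1 / (n : ℝ)) * ∑ k : Fin n, u (t - 1) k S) :
    ∀ t, t ≤ n → ∀ i : Fin n, ∀ S : Finset (Fin n), vstar t i S ≤ u t i S := by
  have hninv : (0:ℝ) ≤ 1 / (n : ℝ) := by positivity
  intro t
  induction t with
  | zero => intro _ i S; rw [hst0]; exact hu0 0 (Nat.zero_le n) i S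
  | succ t ih =>
    intro ht i S
    have ht' : t ≤ n := Nat.le_of_succ_le ht
    have h1 : 1 ≤ t + 1 := Nat.le_add_left 1 t
    have hsum : ∀ T : Finset (Fin n),
        (1 / (n : ℝ)) * ∑ k : Fin n, vstar t k T ≤ (1 / (n : ℝ)) * ∑ k : Fin n, u t k T := by
      intro T
      exact mul_le_mul_of_nonneg_left (Finset.sum_le_sum fun k _ => ih ht' k T) hninv
    rcases S.eq_empty_or_nonempty with rfl | hS
    · rw [hstrec0 (t+1) h1 ht i]
      simp only [Nat.add_sub_cancel]
      calc (1 / (n : ℝ)) * ∑ k : Fin n, vstar t k ∅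
          ≤ (1 / (n : ℝ)) * ∑ k : Fin n, u t k ∅ := hsum ∅
        _ ≤ u (t+1) i ∅ := by
            have := hc2 (t+1) h1 ht i ∅
            simp only [Nat.add_sub_cancel] at this; linarith
    · rw [hstrec (t+1) h1 ht i S hS]
      simp only [Nat.add_sub_cancel]
      apply max_le
      · apply Finset.sup'_le
        intro j hj
        have hins : insert j (S.erase j) = S := Finset.insert_erase hj
        have h1c := hc1 (t+1) h1 ht i j (S.erase j) (Finset.notMem_erase j S)
        simp only [Nat.add_sub_cancel, hins] at h1c
        have := hsum (S.erase j)
        linarith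
      · have := hc2 (t+1) h1 ht i S
        simp only [Nat.add_sub_cancel] at this
        have := hsum S
        linarith

lemma obm_aux_nonneg (n : ℕ)
    (w : ℕ → Fin n → Fin n → ℝ)
    (vstar : ℕ → Fin n → Finset (Fin n) → ℝ)
    (hst0 : ∀ i S, vstar 0 i S = 0)
    (hstrec : ∀ t, 1 ≤ t → t ≤ n → ∀ i : Fin n, ∀ S : Finset (Fin n), ∀ hS : S.Nonempty,
      vstar t i S =
        max (S.sup' hS fun j =>
              w t i j + (1 / (n : ℝ)) * ∑ k : Fin n, vstar (t - 1) k (S.erase j))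
          ((1 / (n : ℝ)) * ∑ k : Fin n, vstar (t - 1) k S))
    (hstrec0 : ∀ t, 1 ≤ t → t ≤ n → ∀ i : Fin n,
      vstar t i (∅ : Finset (Fin n)) = (1 / (n : ℝ)) * ∑ k : Fin n, vstar (t - 1) k ∅) :
    ∀ t, t ≤ n → ∀ i : Fin n, ∀ S : Finset (Fin n), 0 ≤ vstar t i S := by
  have hninv : (0:ℝ) ≤ 1 / (n : ℝ) := by positivity
  intro t
  induction t with
  | zero => intro _ i S; rw [hst0]
  | succ t ih =>
    intro ht i S
    have ht' : t ≤ n := Nat.le_of_succ_le ht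
    have h1 : 1 ≤ t + 1 := Nat.le_add_left 1 t
    have hsum : ∀ T : Finset (Fin n), 0 ≤ (1 / (n : ℝ)) * ∑ k : Fin n, vstar t k T := by
      intro T
      exact mul_nonneg hninv (Finset.sum_nonneg fun k _ => ih ht' k T)
    rcases S.eq_empty_or_nonempty with rfl | hS
    · rw [hstrec0 (t+1) h1 ht i]; simpa using hsum ∅
    · rw [hstrec (t+1) h1 ht i S hS]
      simp only [Nat.add_sub_cancel]
      exact le_trans (hsum S) (le_max_right _ _)

-- vstar satisfies hc2:
lemma obm_aux_hc2 (n : ℕ)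
    (w : ℕ → Fin n → Fin n → ℝ)
    (vstar : ℕ → Fin n → Finset (Fin n) → ℝ)
    (hstrec : ∀ t, 1 ≤ t → t ≤ n → ∀ i : Fin n, ∀ S : Finset (Fin n), ∀ hS : S.Nonempty,
      vstar t i S =
        max (S.sup' hS fun j =>
              w t i j + (1 / (n : ℝ)) * ∑ k : Fin n, vstar (t - 1) k (S.erase j))
          ((1 / (n : ℝ)) * ∑ k : Fin n, vstar (t - 1) k S))
    (hstrec0 : ∀ t, 1 ≤ t → t ≤ n → ∀ i : Fin n,
      vstar t i (∅ : Finset (Fin n)) = (1 / (n : ℝ)) * ∑ k : Fin n, vstar (t - 1) k ∅) :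
    ∀ t, 1 ≤ t → t ≤ n → ∀ i : Fin n, ∀ S : Finset (Fin n),
      0 ≤ vstar t i S - (1 / (n : ℝ)) * ∑ k : Fin n, vstar (t - 1) k S := by
  intro t h1 ht i S
  rcases S.eq_empty_or_nonempty with rfl | hS
  · rw [hstrec0 t h1 ht i]; simp
  · rw [hstrec t h1 ht i S hS]
    have := le_max_right (S.sup' hS fun j =>
        w t i j + (1 / (n : ℝ)) * ∑ k : Fin n, vstar (t - 1) k (S.erase j))
      ((1 / (n : ℝ)) * ∑ k : Fin n, vstar (t - 1) k S)
    linarith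

lemma obm_aux_hc1 (n : ℕ)
    (w : ℕ → Fin n → Fin n → ℝ)
    (vstar : ℕ → Fin n → Finset (Fin n) → ℝ)
    (hstrec : ∀ t, 1 ≤ t → t ≤ n → ∀ i : Fin n, ∀ S : Finset (Fin n), ∀ hS : S.Nonempty,
      vstar t i S =
        max (S.sup' hS fun j =>
              w t i j + (1 / (n : ℝ)) * ∑ k : Fin n, vstar (t - 1) k (S.erase j))
          ((1 / (n : ℝ)) * ∑ k : Fin n, vstar (t - 1) k S)) :
    ∀ t, 1 ≤ t → t ≤ n → ∀ i j : Fin n, ∀ S : Finset (Fin n), j ∉ S →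
      w t i j ≤ vstar t i (insert j S) - (1 / (n : ℝ)) * ∑ k : Fin n, vstar (t - 1) k S := by
  intro t h1 ht i j S hj
  have hS : (insert j S).Nonempty := insert_nonempty j S
  rw [hstrec t h1 ht i (insert j S) hS]
  have hjmem : j ∈ insert j S := Finset.mem_insert_self j S
  have herase : (insert j S).erase j = S := Finset.erase_insert hj
  have hle : w t i j + (1 / (n : ℝ)) * ∑ k : Fin n, vstar (t - 1) k S ≤
      (insert j S).sup' hS fun j' =>
        w t i j' + (1 / (n : ℝ)) * ∑ k : Fin n, vstar (t - 1) k ((insert j S).erase j') := by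
    have := Finset.le_sup' (fun j' =>
      w t i j' + (1 / (n : ℝ)) * ∑ k : Fin n, vstar (t - 1) k ((insert j S).erase j')) hjmem
    rwa [herase] at this
  have h2 := le_trans hle
    (le_max_left _ ((1 / (n : ℝ)) * ∑ k : Fin n, vstar (t - 1) k (insert j S)))
  linarith

/-- Let `v*` be the OBM DP value function (`v*_0 ≡ 0`, and for `t ∈ [n]`,
`v*_t(i,S) = max{max_{j∈S}(w^t_{ij} + (1/n)Σ_k v*_{t−1}(k,S∖{j})), (1/n)Σ_k v*_{t−1}(k,S)}`).
If `v` is any nonnegative family satisfying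
`v_t(i,S∪{j}) − (1/n)Σ_k v_{t−1}(k,S) ≥ w^t_{ij}` (for `j ∉ S`) and
`v_t(i,S) − (1/n)Σ_k v_{t−1}(k,S) ≥ 0`, then `v_t(i,S) ≥ v*_t(i,S)` for all `t ∈ [n]`, `i`,
`S`; in particular `(1/n)Σ_i v_n(i,V) ≥ (1/n)Σ_i v*_n(i,V)`.  Moreover `v*` is itself
nonnegative and feasible, hence it is an optimal solution of the LP minimizing
`(1/n)Σ_i v_n(i,V)` subject to these constraints, whose optimal value is the optimal
expected value `(1/n)Σ_i v*_n(i,V)` of the OBM dynamic program. -/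
theorem dp_lp_strong_dual (n : ℕ) (hn : 1 ≤ n)
    (w : ℕ → Fin n → Fin n → ℝ)
    (vstar : ℕ → Fin n → Finset (Fin n) → ℝ)
    (hst0 : ∀ i S, vstar 0 i S = 0)
    (hstrec : ∀ t, 1 ≤ t → t ≤ n → ∀ i : Fin n, ∀ S : Finset (Fin n), ∀ hS : S.Nonempty,
      vstar t i S =
        max (S.sup' hS fun j =>
              w t i j + (1 / (n : ℝ)) * ∑ k : Fin n, vstar (t - 1) k (S.erase j))
          ((1 / (n : ℝ)) * ∑ k : Fin n, vstar (t - 1) k S))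
    (hstrec0 : ∀ t, 1 ≤ t → t ≤ n → ∀ i : Fin n,
      vstar t i (∅ : Finset (Fin n)) = (1 / (n : ℝ)) * ∑ k : Fin n, vstar (t - 1) k ∅)
    (v : ℕ → Fin n → Finset (Fin n) → ℝ)
    (hv0 : ∀ t, t ≤ n → ∀ i S, 0 ≤ v t i S)
    (hc1 : ∀ t, 1 ≤ t → t ≤ n → ∀ i j : Fin n, ∀ S : Finset (Fin n), j ∉ S →
      w t i j ≤ v t i (insert j S) - (1 / (n : ℝ)) * ∑ k : Fin n, v (t - 1) k S)
    (hc2 : ∀ t, 1 ≤ t → t ≤ n → ∀ i : Fin n, ∀ S : Finset (Fin n),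
      0 ≤ v t i S - (1 / (n : ℝ)) * ∑ k : Fin n, v (t - 1) k S) :
    (∀ t, 1 ≤ t → t ≤ n → ∀ i : Fin n, ∀ S : Finset (Fin n), vstar t i S ≤ v t i S) ∧
    ((1 / (n : ℝ)) * ∑ i : Fin n, vstar n i Finset.univ
      ≤ (1 / (n : ℝ)) * ∑ i : Fin n, v n i Finset.univ) ∧
    (∀ t, t ≤ n → ∀ i : Fin n, ∀ S : Finset (Fin n), 0 ≤ vstar t i S) ∧
    (∀ t, 1 ≤ t → t ≤ n → ∀ i j : Fin n, ∀ S : Finset (Fin n), j ∉ S →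
      w t i j ≤ vstar t i (insert j S) - (1 / (n : ℝ)) * ∑ k : Fin n, vstar (t - 1) k S) ∧
    (∀ t, 1 ≤ t → t ≤ n → ∀ i : Fin n, ∀ S : Finset (Fin n),
      0 ≤ vstar t i S - (1 / (n : ℝ)) * ∑ k : Fin n, vstar (t - 1) k S) ∧
    IsLeast
      {c : ℝ | ∃ u : ℕ → Fin n → Finset (Fin n) → ℝ,
        (∀ t, t ≤ n → ∀ i S, 0 ≤ u t i S) ∧
        (∀ t, 1 ≤ t → t ≤ n → ∀ i j : Fin n, ∀ S : Finset (Fin n), j ∉ S →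
          w t i j ≤ u t i (insert j S) - (1 / (n : ℝ)) * ∑ k : Fin n, u (t - 1) k S) ∧
        (∀ t, 1 ≤ t → t ≤ n → ∀ i : Fin n, ∀ S : Finset (Fin n),
          0 ≤ u t i S - (1 / (n : ℝ)) * ∑ k : Fin n, u (t - 1) k S) ∧
        c = (1 / (n : ℝ)) * ∑ i : Fin n, u n i Finset.univ}
      ((1 / (n : ℝ)) * ∑ i : Fin n, vstar n i Finset.univ) := by
  have hmono := obm_aux_mono n w vstar hst0 hstrec hstrec0 v hv0 hc1 hc2
  have hnn := obm_aux_nonneg n w vstar hst0 hstrec hstrec0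
  have hc1' := obm_aux_hc1 n w vstar hstrec
  have hc2' := obm_aux_hc2 n w vstar hstrec hstrec0
  have hninv : (0:ℝ) ≤ 1 / (n : ℝ) := by positivity
  refine ⟨fun t _ ht i S => hmono t ht i S,
    mul_le_mul_of_nonneg_left
      (Finset.sum_le_sum fun i _ => hmono n le_rfl i Finset.univ) hninv,
    hnn, hc1', hc2', ⟨vstar, hnn, hc1', hc2', rfl⟩, ?_⟩
  rintro c ⟨u, hu0, huc1, huc2, rfl⟩
  exact mul_le_mul_of_nonneg_left
    (Finset.sum_le_sum fun i _ =>
      obm_aux_mono n w vstar hst0 hstrec hstrec0 u hu0 huc1 huc2 n le_rfl i Finset.univ) hninv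
end

section
/- Fix n ≥ 1, an impression type i ∈ N, an ad j ∈ V, and a stage t with 1 ≤ t ≤ n−1. Then the following family of n³ vectors in ℝ^{n³} is linearly independent: (1) the single vector (1/n)·e_{i,j}^t; (2) the n(n−t) vectors (1/n)·e_{k,j}^τ + (1/n)·(1 − 1/n)·e_{i,j}^t for k ∈ N and τ ∈ {t+1,…,n}; (3) the n(t−1) vectors (1/n)·e_{i,j}^t + (1/n)·(1 − 1/n)·e_{k,j}^τ for k ∈ N and τ ∈ {1,…,t−1}; (4) the n²(n−1) vectors (1/n)·e_{i,j}^t + (1/n)·e_{k,ℓ}^τ for k ∈ N, ℓ ∈ V∖{j}, τ ∈ [n]; (5) the n−1 vectors (1/n)·e_{i,j}^t + (1/n)·e_{k,j}^t for k ∈ N∖{i}. -/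
open Finset

lemma stdBasisVec_apply (n : ℕ) (k j τ a b c : Fin n) :
    stdBasisVec n k j τ a b c = if (a, b, c) = (k, j, τ) then 1 else 0 := by
  simp [stdBasisVec, Prod.ext_iff]

lemma aux_li {n : ℕ} {ι : Type*} [Fintype ι] (ind : ι → Fin n × Fin n × Fin n)
    (hind : Function.Injective ind) (c d : ι → ℝ) (hc : ∀ p, c p ≠ 0)
    (p₀ : ι) (hd : d p₀ = 0) :
    LinearIndependent ℝ (fun p =>
      c p • stdBasisVec n (ind p).1 (ind p).2.1 (ind p).2.2
        + d p • stdBasisVec n (ind p₀).1 (ind p₀).2.1 (ind p₀).2.2) := by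
  rw [Fintype.linearIndependent_iff]
  intro g hg
  have hv : ∀ q : ι,
      ∑ p, g p * (c p * (if ind q = ind p then 1 else 0)
        + d p * (if ind q = ind p₀ then 1 else 0)) = 0 := by
    intro q
    have h := congrFun (congrFun (congrFun hg (ind q).1) (ind q).2.1) (ind q).2.2
    simpa [Finset.sum_apply, Pi.add_apply, stdBasisVec_apply, mul_add,
      Prod.ext_iff] using h
  have hne : ∀ q, q ≠ p₀ → (∀ p, g p = 0 → True) := fun _ _ _ _ => trivial
  have h1 : ∀ q, q ≠ p₀ → g q = 0 := by
    intro q hq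
    have := hv q
    rw [Finset.sum_eq_single q] at this
    · have hne0 : ind q ≠ ind p₀ := fun h => hq (hind h)
      have h2 : g q * c q = 0 := by simpa [hne0] using this
      exact (mul_eq_zero.mp h2).resolve_right (hc q)
    · intro p _ hpq
      have : ind q ≠ ind p := fun h => hpq (hind h).symm
      have hne0 : ind q ≠ ind p₀ := fun h => hq (hind h)
      simp [this, hne0]
    · simp
  intro p
  by_cases hp : p = p₀
  · subst hp
    have := hv p
    rw [Finset.sum_eq_single p] at this
    · have h2 : g p * c p = 0 := by simpa [hd] using this
      exact (mul_eq_zero.mp h2).resolve_right (hc p)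
    · intro q _ hqp
      have : ind p ≠ ind q := fun h => hqp (hind h).symm
      simp [this, h1 q hqp]
    · simp
  · exact h1 p hp

/-- Fix `n ≥ 1`, an impression type `i`, an ad `j`, and a stage `t` with
`1 ≤ t ≤ n−1` (encoded as `t : Fin n` with stage number `t.1 + 1 ≤ n − 1`; a stage index
`τ : Fin n` has stage number `τ.1 + 1`, so stages `{t+1,…,n}` are indices `τ > t` and
stages `{1,…,t−1}` are indices `τ < t`).  The following family of `n³` vectors of
`ℝ^{n³}` is linearly independent:
(1) `(1/n)·e_{i,j}^t`;
(2) `(1/n)·e_{k,j}^τ + (1/n)(1 − 1/n)·e_{i,j}^t` for `k ∈ N`, `τ ∈ {t+1,…,n}`;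
(3) `(1/n)·e_{i,j}^t + (1/n)(1 − 1/n)·e_{k,j}^τ` for `k ∈ N`, `τ ∈ {1,…,t−1}`;
(4) `(1/n)·e_{i,j}^t + (1/n)·e_{k,ℓ}^τ` for `k ∈ N`, `ℓ ∈ V∖{j}`, `τ ∈ [n]`;
(5) `(1/n)·e_{i,j}^t + (1/n)·e_{k,j}^t` for `k ∈ N∖{i}`. -/
theorem ineq_J1_points_linearIndependent (n : ℕ) (hn : 1 ≤ n) (i j : Fin n)
    (t : Fin n) (ht : t.1 + 1 < n) :
    LinearIndependent ℝ
      (fun p : Unit ⊕ (Fin n × {τ : Fin n // t < τ}) ⊕ (Fin n × {τ : Fin n // τ < t})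
          ⊕ (Fin n × {l : Fin n // l ≠ j} × Fin n) ⊕ {k : Fin n // k ≠ i} =>
        match p with
        | Sum.inl _ => (1 / (n : ℝ)) • stdBasisVec n i j t
        | Sum.inr (Sum.inl (k, τ)) =>
            (1 / (n : ℝ)) • stdBasisVec n k j τ.1
              + ((1 / (n : ℝ)) * (1 - 1 / (n : ℝ))) • stdBasisVec n i j t
        | Sum.inr (Sum.inr (Sum.inl (k, τ))) =>
            (1 / (n : ℝ)) • stdBasisVec n i j t
              + ((1 / (n : ℝ)) * (1 - 1 / (n : ℝ))) • stdBasisVec n k j τ.1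
        | Sum.inr (Sum.inr (Sum.inr (Sum.inl (k, l, τ)))) =>
            (1 / (n : ℝ)) • stdBasisVec n i j t
              + (1 / (n : ℝ)) • stdBasisVec n k l.1 τ
        | Sum.inr (Sum.inr (Sum.inr (Sum.inr k))) =>
            (1 / (n : ℝ)) • stdBasisVec n i j t
              + (1 / (n : ℝ)) • stdBasisVec n k.1 j t) := by
  have hn2 : 2 ≤ n := by omega
  have hn0 : (n : ℝ) ≠ 0 := by positivity
  have hinv : (1 / (n : ℝ)) ≠ 0 := by positivity
  have h1n : (1 : ℝ) - 1 / n ≠ 0 := by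
    have : (1 / (n : ℝ)) < 1 := by
      rw [div_lt_one (by positivity)]
      exact_mod_cast hn2
    linarith
  set P := Unit ⊕ (Fin n × {τ : Fin n // t < τ}) ⊕ (Fin n × {τ : Fin n // τ < t})
      ⊕ (Fin n × {l : Fin n // l ≠ j} × Fin n) ⊕ {k : Fin n // k ≠ i} with hP
  let ind : P → Fin n × Fin n × Fin n := fun p =>
    match p with
    | Sum.inl _ => (i, j, t)
    | Sum.inr (Sum.inl (k, τ)) => (k, j, τ.1)
    | Sum.inr (Sum.inr (Sum.inl (k, τ))) => (k, j, τ.1)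
    | Sum.inr (Sum.inr (Sum.inr (Sum.inl (k, l, τ)))) => (k, l.1, τ)
    | Sum.inr (Sum.inr (Sum.inr (Sum.inr k))) => (k.1, j, t)
  let c : P → ℝ := fun p =>
    match p with
    | Sum.inl _ => 1 / n
    | Sum.inr (Sum.inl _) => 1 / n
    | Sum.inr (Sum.inr (Sum.inl _)) => (1 / n) * (1 - 1 / n)
    | Sum.inr (Sum.inr (Sum.inr (Sum.inl _))) => 1 / n
    | Sum.inr (Sum.inr (Sum.inr (Sum.inr _))) => 1 / n
  let d : P → ℝ := fun p =>
    match p with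
    | Sum.inl _ => 0
    | Sum.inr (Sum.inl _) => (1 / n) * (1 - 1 / n)
    | Sum.inr (Sum.inr (Sum.inl _)) => 1 / n
    | Sum.inr (Sum.inr (Sum.inr (Sum.inl _))) => 1 / n
    | Sum.inr (Sum.inr (Sum.inr (Sum.inr _))) => 1 / n
  have hind : Function.Injective ind := by
    rintro (⟨⟩ | ⟨k₁, τ₁, hτ₁⟩ | ⟨k₁, τ₁, hτ₁⟩ | ⟨k₁, ⟨l₁, hl₁⟩, τ₁⟩ | ⟨k₁, hk₁⟩)
           (⟨⟩ | ⟨k₂, τ₂, hτ₂⟩ | ⟨k₂, τ₂, hτ₂⟩ | ⟨k₂, ⟨l₂, hl₂⟩, τ₂⟩ | ⟨k₂, hk₂⟩) h <;>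
      simp only [ind, Prod.mk.injEq] at h <;>
      first
      | rfl
      | (exfalso; obtain ⟨h1, h2, h3⟩ := h; subst_vars; first | exact absurd rfl hl₁ | exact absurd rfl hl₂ | exact absurd rfl hk₁ | exact absurd rfl hk₂ | exact lt_irrefl _ hτ₁ | exact lt_irrefl _ hτ₂ | exact lt_irrefl _ (hτ₁.trans hτ₂) | exact absurd h2 hl₁ | exact absurd h2.symm hl₂)
      | (obtain ⟨h1, h2, h3⟩ := h; simp_all [Subtype.ext_iff, Prod.ext_iff])
  have hnn : n ≠ 0 := by omega
  have hinv' : (1 : ℝ) - (n : ℝ)⁻¹ ≠ 0 := by rw [← one_div]; exact h1n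
  have hc : ∀ p, c p ≠ 0 := by
    rintro (⟨⟩ | _ | _ | _ | _) <;> simp [c, hnn, hinv']
  have heq := aux_li ind hind c d hc (Sum.inl ()) rfl
  convert heq using 1
  funext p
  rcases p with (⟨⟩ | ⟨k, τ⟩ | ⟨k, τ⟩ | ⟨k, l, τ⟩ | k) <;>
    simp [ind, c, d, add_comm]
end
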